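/- arXiv:2012.01712 — 4 statements merged into one kernel-verified Lean document; each statement's English description precedes it below -/
import Mathlib

section
/- For every complex number s with Re(s) > 1, the quadruple zeta value satisfies ζ_4(s) = (1/24)·(ζ(s)^4 − 6ζ(s)^2 ζ(2s) + 3ζ(2s)^2 + 8ζ(s)ζ(3s) − 6ζ(4s)), where ζ is the Riemann zeta function. -/
open Complex

/-- The Euler–Zagier multiple zeta-function with identical arguments:
`ζ_r(s) = Σ_{1 ≤ m_1 < m_2 < ⋯ < m_r} (m_1 m_2 ⋯ m_r)^{−s}`, the sum running over
strictly increasing `r`-tuples of positive integers. -/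
noncomputable def zetaEZ (r : ℕ) (s : ℂ) : ℂ :=
  ∑' f : {f : Fin r → ℕ+ // StrictMono f}, (∏ i, ((f.1 i : ℕ) : ℂ)) ^ (-s)

/-!
Listing a strictly increasing 4-tuple by its set of values, `ζ_4(s)` becomes the fourth
elementary symmetric series `e₄` of `b n = n ^ (-s)` over `n : ℕ+`, whose power sums are
`p_k = ζ(k s)`. Newton's identity `24 e₄ = p₁⁴ - 6 p₁² p₂ + 3 p₂² + 8 p₁ p₃ - 6 p₄` holds over
every finite set of indices. Since `∑ ‖b n‖ < ∞`, the products over all finite sets form a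
summable family, so both sides converge along the finite subsets of `ℕ+` and the identity
passes to the limit.
-/

open Finset Filter Topology

section ElementarySymmetric

variable {ι R : Type*}

theorem Finset.sum_powersetCard_succ_insert_prod [DecidableEq ι] [CommSemiring R] (b : ι → R)
    {a : ι} {A : Finset ι} (ha : a ∉ A) (k : ℕ) :
    ∑ t ∈ (insert a A).powersetCard (k + 1), ∏ i ∈ t, b i =
      ∑ t ∈ A.powersetCard (k + 1), ∏ i ∈ t, b i + b a * ∑ t ∈ A.powersetCard k, ∏ i ∈ t, b i := by
  have haA : ∀ t ∈ A.powersetCard k, a ∉ t := fun t ht => notMem_mono (mem_powersetCard.1 ht).1 ha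
  rw [powersetCard_succ_insert ha, sum_union, sum_image, mul_sum]
  · exact congrArg _ (sum_congr rfl fun t ht => prod_insert (haA t ht))
  · exact insert_erase_invOn.2.injOn.mono haA
  · aesop (add simp [disjoint_left, insert_subset_iff, mem_powersetCard])

variable [CommRing R] (b : ι → R)

theorem Finset.two_mul_sum_powersetCard_two_prod (A : Finset ι) :
    2 * ∑ t ∈ A.powersetCard 2, ∏ i ∈ t, b i = (∑ i ∈ A, b i) ^ 2 - ∑ i ∈ A, b i ^ 2 := by
  classical
  induction A using Finset.induction_on with
  | empty => rw [powersetCard_eq_empty.2 (by simp)]; simp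
  | insert a A ha ih =>
    rw [sum_powersetCard_succ_insert_prod b ha, powersetCard_one, sum_map, sum_insert ha,
      sum_insert ha]
    simp only [Function.Embedding.coeFn_mk, prod_singleton]
    linear_combination ih

theorem Finset.six_mul_sum_powersetCard_three_prod (A : Finset ι) :
    6 * ∑ t ∈ A.powersetCard 3, ∏ i ∈ t, b i =
      (∑ i ∈ A, b i) ^ 3 - 3 * (∑ i ∈ A, b i) * ∑ i ∈ A, b i ^ 2 + 2 * ∑ i ∈ A, b i ^ 3 := by
  classical
  induction A using Finset.induction_on with
  | empty => rw [powersetCard_eq_empty.2 (by simp)]; simp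
  | insert a A ha ih =>
    rw [sum_powersetCard_succ_insert_prod b ha, sum_insert ha, sum_insert ha, sum_insert ha]
    linear_combination ih + 3 * b a * two_mul_sum_powersetCard_two_prod b A

theorem Finset.twentyFour_mul_sum_powersetCard_four_prod (A : Finset ι) :
    24 * ∑ t ∈ A.powersetCard 4, ∏ i ∈ t, b i =
      (∑ i ∈ A, b i) ^ 4 - 6 * (∑ i ∈ A, b i) ^ 2 * ∑ i ∈ A, b i ^ 2 + 3 * (∑ i ∈ A, b i ^ 2) ^ 2
        + 8 * (∑ i ∈ A, b i) * ∑ i ∈ A, b i ^ 3 - 6 * ∑ i ∈ A, b i ^ 4 := by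
  classical
  induction A using Finset.induction_on with
  | empty => rw [powersetCard_eq_empty.2 (by simp)]; simp
  | insert a A ha ih =>
    rw [sum_powersetCard_succ_insert_prod b ha, sum_insert ha, sum_insert ha, sum_insert ha,
      sum_insert ha]
    linear_combination ih + 4 * b a * six_mul_sum_powersetCard_three_prod b A

end ElementarySymmetric

section ElementarySymmetricSeries

variable {ι R : Type*} [NormedCommRing R] [NormOneClass R] [CompleteSpace R] {b : ι → R}

theorem summable_powersetCard_prod (hb : Summable (‖b ·‖)) (r : ℕ) :
    Summable fun t : Set.powersetCard ι r => ∏ i ∈ (t : Finset ι), b i :=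
  (summable_finsetProd_of_summable_norm hb).subtype _

theorem tendsto_sum_powersetCard_prod (hb : Summable (‖b ·‖)) (r : ℕ) :
    Tendsto (fun A : Finset ι => ∑ t ∈ A.powersetCard r, ∏ i ∈ t, b i) atTop
      (𝓝 (∑' t : Set.powersetCard ι r, ∏ i ∈ (t : Finset ι), b i)) := by
  have hsum : HasSum ((Set.powersetCard ι r).indicator fun t => ∏ i ∈ t, b i)
      (∑' t : Set.powersetCard ι r, ∏ i ∈ (t : Finset ι), b i) :=
    hasSum_subtype_iff_indicator.1 (summable_powersetCard_prod hb r).hasSum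
  have hpowerset : Tendsto (powerset : Finset ι → Finset (Finset ι)) atTop atTop :=
    tendsto_atTop_finset_of_monotone (fun _ _ => powerset_mono.2) fun t => ⟨t, mem_powerset_self t⟩
  convert hsum.comp hpowerset using 2 with A
  simp [powersetCard_eq_filter, sum_filter, Set.indicator]

theorem twentyFour_mul_tsum_powersetCard_four_prod (hb : Summable (‖b ·‖)) {p₁ p₂ p₃ p₄ : R}
    (h₁ : HasSum b p₁) (h₂ : HasSum (b · ^ 2) p₂) (h₃ : HasSum (b · ^ 3) p₃)
    (h₄ : HasSum (b · ^ 4) p₄) :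
    24 * ∑' t : Set.powersetCard ι 4, ∏ i ∈ (t : Finset ι), b i =
      p₁ ^ 4 - 6 * p₁ ^ 2 * p₂ + 3 * p₂ ^ 2 + 8 * p₁ * p₃ - 6 * p₄ := by
  refine tendsto_nhds_unique ((tendsto_sum_powersetCard_prod hb 4).const_mul 24) ?_
  simp_rw [twentyFour_mul_sum_powersetCard_four_prod]
  exact (((((h₁.pow 4).sub (((h₁.pow 2).const_mul 6).mul h₂)).add ((h₂.pow 2).const_mul 3)).add
    ((h₁.const_mul 8).mul h₃)).sub (h₄.const_mul 6))

end ElementarySymmetricSeries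

def strictMonoEquivPowersetCard (I : Type*) [LinearOrder I] (r : ℕ) :
    {f : Fin r → I // StrictMono f} ≃ Set.powersetCard I r :=
  Equiv.trans { toFun f := OrderEmbedding.ofStrictMono f.1 f.2, invFun e := ⟨e, e.strictMono⟩ }
    Set.powersetCard.ofFinEmbEquiv

theorem prod_strictMonoEquivPowersetCard {I M : Type*} [LinearOrder I] [CommMonoid M] {r : ℕ}
    (f : {f : Fin r → I // StrictMono f}) (b : I → M) :
    ∏ i ∈ (strictMonoEquivPowersetCard I r f : Finset I), b i = ∏ j, b (f.1 j) :=
  prod_map _ _ _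

theorem natCast_prod_cpow {ι : Type*} (t : Finset ι) (f : ι → ℕ) (s : ℂ) :
    ((∏ i ∈ t, f i : ℕ) : ℂ) ^ s = ∏ i ∈ t, (f i : ℂ) ^ s := by
  induction t using Finset.cons_induction with
  | empty => simp
  | cons a t ha ih => rw [prod_cons, prod_cons, Nat.cast_mul, natCast_mul_natCast_cpow, ih]

theorem zetaEZ_eq_tsum_powersetCard (r : ℕ) (s : ℂ) :
    zetaEZ r s = ∑' t : Set.powersetCard ℕ+ r, ∏ n ∈ (t : Finset ℕ+), ((n : ℕ) : ℂ) ^ (-s) := by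
  rw [zetaEZ, ← (strictMonoEquivPowersetCard ℕ+ r).tsum_eq]
  simp_rw [prod_strictMonoEquivPowersetCard, ← Nat.cast_prod, natCast_prod_cpow]

theorem hasSum_pnat_cpow_neg {s : ℂ} (hs : 1 < s.re) :
    HasSum (fun n : ℕ+ => ((n : ℕ) : ℂ) ^ (-s)) (riemannZeta s) := by
  have h : HasSum (fun n : ℕ+ => LSeries.term 1 s n) (riemannZeta s) :=
    hasSum_pnat_iff.2 (by rw [LSeries.term_zero, add_zero]; exact LSeriesHasSum_one hs)
  convert h using 2 with n
  simp [LSeries.term, cpow_neg]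

theorem hasSum_pnat_cpow_neg_pow {s : ℂ} (hs : 1 < s.re) {k : ℕ} (hk : k ≠ 0) :
    HasSum (fun n : ℕ+ => (((n : ℕ) : ℂ) ^ (-s)) ^ k) (riemannZeta (k * s)) := by
  have hks : 1 < (k * s).re := by
    simp only [mul_re, natCast_re, natCast_im, zero_mul, sub_zero]
    exact one_lt_mul_of_le_of_lt (Nat.one_le_cast.2 (Nat.one_le_iff_ne_zero.2 hk)) hs
  simpa only [← cpow_nat_mul, mul_neg] using hasSum_pnat_cpow_neg hks

theorem quadruple_zeta_formula (s : ℂ) (hs : 1 < s.re) :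
    zetaEZ 4 s = (1 / 24) * (riemannZeta s ^ 4
      - 6 * riemannZeta s ^ 2 * riemannZeta (2 * s)
      + 3 * riemannZeta (2 * s) ^ 2
      + 8 * riemannZeta s * riemannZeta (3 * s)
      - 6 * riemannZeta (4 * s)) := by
  have h₁ := hasSum_pnat_cpow_neg hs
  have h₂ := hasSum_pnat_cpow_neg_pow hs (k := 2) two_ne_zero
  have h₃ := hasSum_pnat_cpow_neg_pow hs (k := 3) three_ne_zero
  have h₄ := hasSum_pnat_cpow_neg_pow hs (k := 4) four_ne_zero
  push_cast at h₂ h₃ h₄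
  rw [zetaEZ_eq_tsum_powersetCard]
  linear_combination
    twentyFour_mul_tsum_powersetCard_four_prod h₁.summable.norm h₁ h₂ h₃ h₄ / 24
end

section
/- For every integer r ≥ 1, (rs − 1)·Z_r(s) tends to (−1)^{r−1}/r as s tends to 1/r (through s ≠ 1/r); that is, the leading coefficient C_r(r) of Z_r at its simple pole s = 1/r, in the variable (rs − 1), equals (−1)^{r−1}/r. -/
open Filter Topology Complex

/-- The meromorphic continuation of the Euler–Zagier multiple zeta-function with
identical arguments, defined recursively by Newton's identities: `Z 0 s = 1` and
`Z r s = (1/r) · Σ_{j=1}^{r} (−1)^{j−1} Z (r−j) s · ζ(js)` (here the summation index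
`i = j − 1` runs over `Finset.range r`), where `ζ` is the analytically continued
Riemann zeta function. -/
noncomputable def Z : ℕ → ℂ → ℂ
  | 0, _ => 1
  | (r + 1), s =>
      (1 / ((r : ℂ) + 1)) *
        ∑ i ∈ Finset.range (r + 1),
          (-1 : ℂ) ^ i * Z (r - i) s * riemannZeta (((i : ℂ) + 1) * s)

/-!
Proof idea: in the recursion for `Z_r`, every `Z_{r-j}` with `j ≥ 1` is holomorphic at `1/r`
(its possible poles are at `1/l` with `l < r`), and so is `ζ(js)` for `j < r`. Hence after
multiplying by `rs - 1` only the summand `j = r`, namely `(-1)^{r-1} ζ(rs)/r`, survives in the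
limit, and `(rs - 1) ζ(rs) → 1` by the simple pole of `ζ` at `1` with residue `1`.
-/

theorem Z_zero (s : ℂ) : Z 0 s = 1 := by
  rw [Z]

theorem Z_succ (r : ℕ) (s : ℂ) :
    Z (r + 1) s = ((r + 1 : ℕ) : ℂ)⁻¹ * ∑ i ∈ Finset.range (r + 1),
      (-1 : ℂ) ^ i * Z (r - i) s * riemannZeta ((i + 1 : ℕ) * s) := by
  rw [Z]
  push_cast
  rw [one_div]

theorem continuousAt_riemannZeta_const_mul {c s₀ : ℂ} (h : c * s₀ ≠ 1) :
    ContinuousAt (fun s => riemannZeta (c * s)) s₀ :=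
  (differentiableAt_riemannZeta h).continuousAt.comp (continuous_const_mul c).continuousAt

theorem continuousAt_Z {m : ℕ} {s₀ : ℂ} (h : ∀ j : ℕ, 0 < j → j ≤ m → (j : ℂ) * s₀ ≠ 1) :
    ContinuousAt (Z m) s₀ := by
  induction m using Nat.strong_induction_on with
  | _ m ih =>
    cases m with
    | zero => simpa only [funext Z_zero] using continuousAt_const
    | succ m =>
      simp only [funext (Z_succ m)]
      refine continuousAt_const.mul (tendsto_finsetSum _ fun i hi => ?_)
      have hi := Finset.mem_range.1 hi
      have hZ : ContinuousAt (Z (m - i)) s₀ :=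
        ih (m - i) (by omega) fun j hj hjm => h j hj (by omega)
      exact (continuousAt_const.mul hZ).mul
        (continuousAt_riemannZeta_const_mul (h (i + 1) i.succ_pos (by omega)))

theorem natCast_mul_inv_natCast_ne_one {j r : ℕ} (h : j < r) : (j : ℂ) * (r : ℂ)⁻¹ ≠ 1 := by
  have hr : (r : ℂ) ≠ 0 := Nat.cast_ne_zero.2 (by omega)
  rw [Ne, mul_inv_eq_one₀ hr, Nat.cast_inj]
  exact h.ne

theorem continuousAt_Z_mul_riemannZeta {m j r : ℕ} (hm : m < r) (hj : j < r) :
    ContinuousAt (fun s => Z m s * riemannZeta (j * s)) (r : ℂ)⁻¹ :=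
  (continuousAt_Z fun _ _ hl => natCast_mul_inv_natCast_ne_one (hl.trans_lt hm)).mul
    (continuousAt_riemannZeta_const_mul (natCast_mul_inv_natCast_ne_one hj))

theorem tendsto_const_mul_sub_one_nhdsNE_inv {c : ℂ} (hc : c ≠ 0) :
    Tendsto (fun s => c * s - 1) (𝓝[≠] c⁻¹) (𝓝 0) := by
  have h : ContinuousAt (fun s => c * s - 1) c⁻¹ := by fun_prop
  simpa [mul_inv_cancel₀ hc] using h.tendsto.mono_left nhdsWithin_le_nhds

theorem tendsto_const_mul_sub_one_mul_riemannZeta {c : ℂ} (hc : c ≠ 0) :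
    Tendsto (fun s => (c * s - 1) * riemannZeta (c * s)) (𝓝[≠] c⁻¹) (𝓝 1) := by
  have hlim : Tendsto (fun s => c * s) (𝓝[≠] c⁻¹) (𝓝 1) := by
    simpa [mul_inv_cancel₀ hc] using
      ((continuous_const_mul c).tendsto c⁻¹).mono_left nhdsWithin_le_nhds
  have hne : ∀ᶠ s in 𝓝[≠] c⁻¹, c * s ∈ ({1}ᶜ : Set ℂ) :=
    eventually_nhdsWithin_of_forall fun s hs hcs => hs (inv_eq_of_mul_eq_one_right hcs).symm
  exact riemannZeta_residue_one.comp (tendsto_nhdsWithin_iff.2 ⟨hlim, hne⟩)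

theorem multiple_zeta_leading_coeff_at_inv_r (r : ℕ) (hr : 1 ≤ r) :
    Tendsto (fun s : ℂ => ((r : ℂ) * s - 1) * Z r s) (𝓝[≠] (1 / (r : ℂ)))
      (𝓝 ((-1 : ℂ) ^ (r - 1) / (r : ℂ))) := by
  obtain ⟨k, rfl⟩ := Nat.exists_eq_add_of_le' hr
  have hr0 : ((k + 1 : ℕ) : ℂ) ≠ 0 := Nat.cast_ne_zero.2 k.succ_ne_zero
  have hterm : ∀ i ∈ Finset.range (k + 1), Tendsto (fun s => ((k + 1 : ℕ) * s - 1) *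
      ((-1 : ℂ) ^ i * Z (k - i) s * riemannZeta ((i + 1 : ℕ) * s)))
      (𝓝[≠] ((k + 1 : ℕ) : ℂ)⁻¹) (𝓝 (if i = k then (-1) ^ k else 0)) := by
    intro i hi
    split_ifs with hik
    · subst hik
      simpa [Z_zero, mul_left_comm] using
        (tendsto_const_mul_sub_one_mul_riemannZeta hr0).const_mul ((-1 : ℂ) ^ i)
    · have hcont := continuousAt_Z_mul_riemannZeta (m := k - i) (j := i + 1) (r := k + 1)
        (by omega) (by have := Finset.mem_range.1 hi; omega)
      simpa [mul_assoc] using (tendsto_const_mul_sub_one_nhdsNE_inv hr0).mul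
        ((hcont.const_mul ((-1 : ℂ) ^ i)).tendsto.mono_left nhdsWithin_le_nhds)
  have hsum := (tendsto_finsetSum _ hterm).const_mul ((k + 1 : ℕ) : ℂ)⁻¹
  rw [Finset.sum_ite_eq' _ _, if_pos (Finset.self_mem_range_succ k)] at hsum
  simpa [Z_succ, Finset.mul_sum, mul_left_comm, div_eq_inv_mul] using hsum
end

section
/- Let k ≥ 2 and r ≥ 1 be integers. Then (ks − 1)^r · Z_{kr}(s) tends to (−1)^{(k−1)r}/(k^r · r!) as s tends to 1/k (through s ≠ 1/k); that is, the leading coefficient C_{kr}(k) of Z_{kr} at its pole of order r at s = 1/k, in the variable (ks − 1), equals (−1)^{(k−1)r}/(k^r · r!). -/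
open Filter Topology Complex

/-! Near `s = 1/k` the only zeta value in the recursion for `Z` with a pole is `ζ(ks)`, a simple
pole with residue `1` in the variable `ks - 1`. By strong induction `(ks - 1)^N · Z m s` has a
limit whenever `N ≥ ⌊m/k⌋`, so it tends to `0` when `N > ⌊m/k⌋`. Multiplying the recursion for
`Z (k(r+1))` by `(ks - 1)^(r+1)`, every summand therefore vanishes in the limit except the one
containing `ζ(ks)`, so the limits `C_r` of `(ks - 1)^r · Z (kr) s` satisfy
`C_{r+1} = (-1)^(k-1) C_r / (k(r+1))`. -/

section Zeta

variable {c : ℂ}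

lemma tendsto_mul_nhdsNE_inv (hc : c ≠ 0) :
    Tendsto (fun s => c * s) (𝓝[≠] c⁻¹) (𝓝[≠] 1) := by
  have h := (Homeomorph.mulLeft₀ c hc).map_punctured_nhds_eq c⁻¹
  simp only [Homeomorph.coe_mulLeft₀, mul_inv_cancel₀ hc] at h
  exact h.le

lemma tendsto_mul_sub_one_mul_riemannZeta_mul (hc : c ≠ 0) :
    Tendsto (fun s => (c * s - 1) * riemannZeta (c * s)) (𝓝[≠] c⁻¹) (𝓝 1) :=
  riemannZeta_residue_one.comp (tendsto_mul_nhdsNE_inv hc)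

lemma tendsto_riemannZeta_mul {a x : ℂ} (h : a * x ≠ 1) :
    Tendsto (fun s => riemannZeta (a * s)) (𝓝[≠] x) (𝓝 (riemannZeta (a * x))) :=
  ((differentiableAt_riemannZeta h).continuousAt.comp
    (continuous_const_mul a).continuousAt).tendsto.mono_left nhdsWithin_le_nhds

lemma tendsto_mul_sub_one_pow (hc : c ≠ 0) (d : ℕ) :
    Tendsto (fun s => (c * s - 1) ^ d) (𝓝[≠] c⁻¹) (𝓝 (0 ^ d)) := by
  have h : Tendsto (fun s => (c * s - 1) ^ d) (𝓝 c⁻¹) (𝓝 ((c * c⁻¹ - 1) ^ d)) :=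
    (by fun_prop : Continuous fun s => (c * s - 1) ^ d).tendsto _
  rw [mul_inv_cancel₀ hc, sub_self] at h
  exact h.mono_left nhdsWithin_le_nhds

end Zeta

lemma mul_Z_succ (a : ℂ) (n : ℕ) (s : ℂ) :
    a * Z (n + 1) s = 1 / ((n : ℂ) + 1) * ∑ i ∈ Finset.range (n + 1),
      (-1) ^ i * (a * Z (n - i) s) * riemannZeta ((i + 1) * s) := by
  rw [Z, mul_left_comm, Finset.mul_sum]
  congr 1
  exact Finset.sum_congr rfl fun i _ => by ring

lemma natCast_add_one_mul_inv_ne_one {i k : ℕ} (h : i + 1 ≠ k) :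
    ((i : ℂ) + 1) * (k : ℂ)⁻¹ ≠ 1 := by
  rcases eq_or_ne k 0 with rfl | hk
  · simp
  · rw [Ne, mul_inv_eq_one₀ (by exact_mod_cast hk)]
    exact_mod_cast h

noncomputable def multipleZetaLeadingCoeff (k r : ℕ) : ℂ :=
  (-1) ^ ((k - 1) * r) / ((k : ℂ) ^ r * r.factorial)

lemma multipleZetaLeadingCoeff_succ {k : ℕ} (hk : (k : ℂ) ≠ 0) (r : ℕ) :
    multipleZetaLeadingCoeff k (r + 1) =
      (-1) ^ (k - 1) * multipleZetaLeadingCoeff k r / (k * (r + 1)) := by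
  simp only [multipleZetaLeadingCoeff]
  rw [Nat.factorial_succ, mul_add_one (k - 1), pow_add, pow_succ]
  push_cast
  field_simp

section Pole

variable {k : ℕ}

lemma exists_tendsto_pow_mul_Z (hk : 0 < k) (m N : ℕ) (hN : m / k ≤ N) :
    ∃ L, Tendsto (fun s => ((k : ℂ) * s - 1) ^ N * Z m s) (𝓝[≠] (k : ℂ)⁻¹) (𝓝 L) := by
  have hkC : (k : ℂ) ≠ 0 := by exact_mod_cast hk.ne'
  induction m using Nat.strong_induction_on generalizing N with
  | _ m ih =>
  cases m with
  | zero => exact ⟨_, by simpa [Z] using tendsto_mul_sub_one_pow hkC N⟩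
  | succ n =>
    have hterm : ∀ i ∈ Finset.range (n + 1), ∃ L, Tendsto (fun s =>
        (-1) ^ i * (((k : ℂ) * s - 1) ^ N * Z (n - i) s) * riemannZeta ((i + 1) * s))
        (𝓝[≠] (k : ℂ)⁻¹) (𝓝 L) := by
      intro i hi
      rw [Finset.mem_range] at hi
      by_cases hik : i + 1 = k
      · have hdiv := Nat.div_eq_sub_div hk (show k ≤ n + 1 by omega)
        have hni : n - i = n + 1 - k := by omega
        obtain ⟨M, rfl⟩ : ∃ M, N = M + 1 := Nat.exists_eq_add_one.mpr
          ((Nat.succ_pos _).trans_le (hdiv.symm.le.trans hN))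
        obtain ⟨L, hL⟩ := ih (n - i) (Nat.lt_succ_of_le (Nat.sub_le n i)) M
          (by rw [hni, ← Nat.add_one_le_add_one_iff, ← hdiv]; exact hN)
        have hcast : (i : ℂ) + 1 = k := by exact_mod_cast hik
        refine ⟨_, (((tendsto_const_nhds (x := (-1) ^ i)).mul hL).mul
          (tendsto_mul_sub_one_mul_riemannZeta_mul hkC)).congr fun s => ?_⟩
        rw [hcast, pow_succ]
        ring
      · obtain ⟨L, hL⟩ := ih (n - i) (Nat.lt_succ_of_le (Nat.sub_le n i)) N
          ((Nat.div_le_div_right (by omega)).trans hN)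
        exact ⟨_, ((tendsto_const_nhds (x := (-1) ^ i)).mul hL).mul
          (tendsto_riemannZeta_mul (natCast_add_one_mul_inv_ne_one hik))⟩
    choose! L hL using hterm
    exact ⟨_, ((tendsto_finsetSum _ hL).const_mul _).congr fun s => (mul_Z_succ _ n s).symm⟩

lemma tendsto_pow_mul_Z_of_div_lt (hk : 0 < k) {m N : ℕ} (h : m / k < N) :
    Tendsto (fun s => ((k : ℂ) * s - 1) ^ N * Z m s) (𝓝[≠] (k : ℂ)⁻¹) (𝓝 0) := by
  obtain ⟨M, rfl⟩ : ∃ M, N = M + 1 := Nat.exists_eq_add_one.mpr ((Nat.zero_le _).trans_lt h)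
  obtain ⟨L, hL⟩ := exists_tendsto_pow_mul_Z hk m M (Nat.lt_succ_iff.mp h)
  have h0 := (tendsto_mul_sub_one_pow (by exact_mod_cast hk.ne') 1).mul hL
  rw [pow_one, zero_mul] at h0
  exact h0.congr fun s => by ring

lemma tendsto_pow_mul_Z_mul (hk : 0 < k) (r : ℕ) :
    Tendsto (fun s => ((k : ℂ) * s - 1) ^ r * Z (k * r) s) (𝓝[≠] (k : ℂ)⁻¹)
      (𝓝 (multipleZetaLeadingCoeff k r)) := by
  have hkC : (k : ℂ) ≠ 0 := by exact_mod_cast hk.ne'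
  induction r with
  | zero => simp [Z, multipleZetaLeadingCoeff]
  | succ r ih =>
    obtain ⟨n, hn⟩ : ∃ n, k * (r + 1) = n + 1 :=
      ⟨k * r + (k - 1), by rw [Nat.mul_succ]; omega⟩
    have hkn : k ≤ n + 1 := hn ▸ Nat.le_mul_of_pos_right k r.succ_pos
    have hterm : ∀ i ∈ Finset.range (n + 1), Tendsto (fun s =>
        (-1) ^ i * (((k : ℂ) * s - 1) ^ (r + 1) * Z (n - i) s) * riemannZeta ((i + 1) * s))
        (𝓝[≠] (k : ℂ)⁻¹)
        (𝓝 (if i = k - 1 then (-1) ^ (k - 1) * multipleZetaLeadingCoeff k r else 0)) := by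
      intro i hi
      split_ifs with hik
      · subst hik
        have hcast : ((k - 1 : ℕ) : ℂ) + 1 = k := by rw [Nat.cast_sub hk]; push_cast; ring
        have hni : n - (k - 1) = k * r := by rw [Nat.mul_succ] at hn; omega
        have h := ((tendsto_const_nhds (x := (-1 : ℂ) ^ (k - 1))).mul ih).mul
          (tendsto_mul_sub_one_mul_riemannZeta_mul hkC)
        rw [mul_one] at h
        refine h.congr fun s => ?_
        rw [hcast, hni, pow_succ]
        ring
      · have hlt : (n - i) / k < r + 1 := by
          rw [Nat.div_lt_iff_lt_mul hk, mul_comm, hn]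
          omega
        simpa only [mul_zero, zero_mul] using
          ((tendsto_pow_mul_Z_of_div_lt hk hlt).const_mul ((-1) ^ i)).mul
            (tendsto_riemannZeta_mul (natCast_add_one_mul_inv_ne_one (i := i) (k := k) (by omega)))
    have hsum := (tendsto_finsetSum _ hterm).const_mul (1 / ((n : ℂ) + 1))
    rw [Finset.sum_ite_eq', if_pos (Finset.mem_range.mpr (by omega))] at hsum
    have hnC : (n : ℂ) + 1 = k * (r + 1) := by exact_mod_cast hn.symm
    rw [hn, multipleZetaLeadingCoeff_succ hkC, ← hnC, div_eq_mul_one_div, mul_comm]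
    exact hsum.congr fun s => (mul_Z_succ _ n s).symm

end Pole

theorem multiple_zeta_leading_coeff_kr_general (k r : ℕ) (hk : 2 ≤ k) :
    Tendsto (fun s : ℂ => ((k : ℂ) * s - 1) ^ r * Z (k * r) s) (𝓝[≠] (1 / (k : ℂ)))
      (𝓝 ((-1 : ℂ) ^ ((k - 1) * r) / ((k : ℂ) ^ r * (Nat.factorial r : ℂ)))) := by
  simpa only [one_div, multipleZetaLeadingCoeff] using tendsto_pow_mul_Z_mul (by omega) r

theorem multiple_zeta_leading_coeff_kr (k r : ℕ) (hk : 2 ≤ k) (hr : 1 ≤ r) :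
    Tendsto (fun s : ℂ => ((k : ℂ) * s - 1) ^ r * Z (k * r) s) (𝓝[≠] (1 / (k : ℂ)))
      (𝓝 ((-1 : ℂ) ^ ((k - 1) * r) / ((k : ℂ) ^ r * (Nat.factorial r : ℂ)))) :=
  multiple_zeta_leading_coeff_kr_general k r hk
end

section
/- Let k ≥ 2, r ≥ 1 and ℓ be integers with 1 ≤ ℓ ≤ k − 1. Then (ks − 1)^r · Z_{kr+ℓ}(s) tends to ((−1)^{(k−1)r}/(k^r · r!))·Z_ℓ(1/k) as s tends to 1/k (through s ≠ 1/k); that is, the leading coefficient C_{kr+ℓ}(k) of Z_{kr+ℓ} at its pole of order r at s = 1/k, in the variable (ks − 1), equals ((−1)^{(k−1)r}/(k^r · r!))·Z_ℓ(1/k). -/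
/-!
Set `m = kq + j` with `j < k` and `c_q = (-1)^((k-1)q) / (k^q q!)`; by strong induction on `m`,
`(ks - 1)^q Z_m(s) → c_q Z_j(1/k)` as `s → 1/k`. Multiply Newton's identity
`m Z_m(s) = Σ_{i<m} (-1)^i Z_{m-1-i}(s) ζ((i+1)s)` by `(ks - 1)^q`. Only `ζ(ks)` (the term `i = k - 1`)
has a pole at `1/k`, a simple one with `(ks - 1) ζ(ks) → 1`. The terms with `i < j` keep the index
shape `kq + (j - 1 - i)` and sum to `c_q · j Z_j(1/k)` by Newton's identity for `Z_j`; the term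
`i = k - 1` gives `(-1)^(k-1) c_{q-1} Z_j(1/k) = kq · c_q Z_j(1/k)`; every other term has `Z`-index
below `kq`, so a spare power of `ks - 1` kills it. The total is `m · c_q Z_j(1/k)`.
-/

open Filter Topology Complex

open Finset

lemma natCast_mul_Z (m : ℕ) (s : ℂ) :
    (m : ℂ) * Z m s =
      ∑ i ∈ range m, (-1 : ℂ) ^ i * Z (m - 1 - i) s * riemannZeta (((i : ℂ) + 1) * s) := by
  cases m with
  | zero => simp
  | succ r =>
    rw [Z, ← mul_assoc, Nat.cast_succ, mul_one_div_cancel (Nat.cast_add_one_ne_zero r), one_mul,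
      Nat.add_sub_cancel]

noncomputable def leadingPoleCoeff (k q : ℕ) : ℂ :=
  (-1 : ℂ) ^ ((k - 1) * q) / ((k : ℂ) ^ q * (q.factorial : ℂ))

section

variable {k : ℕ}

lemma neg_one_pow_mul_leadingPoleCoeff (hk : k ≠ 0) (q : ℕ) :
    (-1 : ℂ) ^ (k - 1) * leadingPoleCoeff k q =
      k * (q + 1 : ℕ) * leadingPoleCoeff k (q + 1) := by
  have hk' : (k : ℂ) ≠ 0 := Nat.cast_ne_zero.2 hk
  simp only [leadingPoleCoeff, Nat.factorial_succ, Nat.cast_mul, pow_succ, Nat.mul_succ, pow_add]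
  field_simp

lemma tendsto_riemannZeta_mul_s11 {i : ℕ} (hi : i + 1 ≠ k) :
    Tendsto (fun s : ℂ => riemannZeta (((i : ℂ) + 1) * s)) (𝓝 (1 / k))
      (𝓝 (riemannZeta (((i : ℂ) + 1) * (1 / k)))) := by
  have hne : ((i : ℂ) + 1) * (1 / k) ≠ 1 := by
    rcases eq_or_ne k 0 with rfl | hk
    · simp
    rw [mul_one_div, Ne, div_eq_one_iff_eq (Nat.cast_ne_zero.2 hk)]
    exact_mod_cast hi
  exact (differentiableAt_riemannZeta hne).continuousAt.comp (continuous_const_mul _).continuousAt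

lemma tendsto_natCast_mul_nhdsNE (hk : k ≠ 0) :
    Tendsto (fun s : ℂ => (k : ℂ) * s) (𝓝[≠] (1 / k)) (𝓝[≠] 1) := by
  have hk' : (k : ℂ) ≠ 0 := Nat.cast_ne_zero.2 hk
  have hmaps : Set.MapsTo (fun s : ℂ => (k : ℂ) * s) {1 / (k : ℂ)}ᶜ {1}ᶜ := fun s hs h =>
    hs (by rw [Set.mem_singleton_iff, eq_div_iff hk', mul_comm]; exact h)
  simpa [mul_inv_cancel₀ hk'] using
    (continuous_const_mul (k : ℂ)).continuousWithinAt.tendsto_nhdsWithin (x := 1 / (k : ℂ)) hmaps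

lemma tendsto_natCast_mul_sub_one (hk : k ≠ 0) :
    Tendsto (fun s : ℂ => (k : ℂ) * s - 1) (𝓝 (1 / k)) (𝓝 0) := by
  have hk' : (k : ℂ) ≠ 0 := Nat.cast_ne_zero.2 hk
  have h : Continuous (fun s : ℂ => (k : ℂ) * s - 1) := by fun_prop
  simpa [mul_inv_cancel₀ hk'] using h.tendsto (1 / (k : ℂ))

section Terms

variable {f : ℂ → ℂ} {q : ℕ} {L : ℂ}

lemma tendsto_pow_mul_zeta_term
    (hf : Tendsto (fun s : ℂ => ((k : ℂ) * s - 1) ^ q * f s) (𝓝[≠] (1 / k)) (𝓝 L))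
    {i : ℕ} (hi : i + 1 ≠ k) :
    Tendsto (fun s : ℂ => ((k : ℂ) * s - 1) ^ q *
        ((-1 : ℂ) ^ i * f s * riemannZeta (((i : ℂ) + 1) * s))) (𝓝[≠] (1 / k))
      (𝓝 ((-1 : ℂ) ^ i * L * riemannZeta (((i : ℂ) + 1) * (1 / k)))) :=
  ((hf.const_mul _).mul ((tendsto_riemannZeta_mul_s11 hi).mono_left nhdsWithin_le_nhds)).congr
    fun s => by ring

lemma tendsto_pow_mul_zeta_term_of_lt
    (hf : Tendsto (fun s : ℂ => ((k : ℂ) * s - 1) ^ q * f s) (𝓝[≠] (1 / k)) (𝓝 L))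
    (hk : k ≠ 0) {p i : ℕ} (hqp : q < p) (hi : i + 1 ≠ k) :
    Tendsto (fun s : ℂ => ((k : ℂ) * s - 1) ^ p *
        ((-1 : ℂ) ^ i * f s * riemannZeta (((i : ℂ) + 1) * s))) (𝓝[≠] (1 / k)) (𝓝 0) := by
  have hvanish : Tendsto (fun s : ℂ => ((k : ℂ) * s - 1) ^ (p - q)) (𝓝[≠] (1 / k)) (𝓝 0) := by
    simpa [zero_pow (Nat.sub_ne_zero_of_lt hqp)] using
      ((tendsto_natCast_mul_sub_one hk).pow (p - q)).mono_left nhdsWithin_le_nhds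
  simpa using (hvanish.mul (tendsto_pow_mul_zeta_term hf hi)).congr fun s => by
    rw [← mul_assoc, ← pow_add, Nat.sub_add_cancel hqp.le]

lemma tendsto_pow_succ_mul_zeta_term_pole
    (hf : Tendsto (fun s : ℂ => ((k : ℂ) * s - 1) ^ q * f s) (𝓝[≠] (1 / k)) (𝓝 L))
    (hk : k ≠ 0) {i : ℕ} (hi : i + 1 = k) :
    Tendsto (fun s : ℂ => ((k : ℂ) * s - 1) ^ (q + 1) *
        ((-1 : ℂ) ^ i * f s * riemannZeta (((i : ℂ) + 1) * s))) (𝓝[≠] (1 / k))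
      (𝓝 ((-1 : ℂ) ^ i * L)) := by
  have hres : Tendsto (fun s : ℂ => ((k : ℂ) * s - 1) * riemannZeta ((k : ℂ) * s))
      (𝓝[≠] (1 / k)) (𝓝 1) :=
    riemannZeta_residue_one.comp (tendsto_natCast_mul_nhdsNE hk)
  have hik : (i : ℂ) + 1 = k := by exact_mod_cast hi
  simpa using ((hf.const_mul ((-1 : ℂ) ^ i)).mul hres).congr fun s => by
    rw [hik, pow_succ]; ring

end Terms

lemma tendsto_pow_mul_Z_tail_sum (hk : k ≠ 0) {j : ℕ} (hj : j < k) (q : ℕ)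
    (ih : ∀ q' j', j' < k → k * q' + j' < k * q + j →
      Tendsto (fun s : ℂ => ((k : ℂ) * s - 1) ^ q' * Z (k * q' + j') s) (𝓝[≠] (1 / k))
        (𝓝 (leadingPoleCoeff k q' * Z j' (1 / k)))) :
    Tendsto (fun s : ℂ => ∑ i ∈ Ico j (k * q + j), ((k : ℂ) * s - 1) ^ q *
        ((-1 : ℂ) ^ i * Z (k * q + j - 1 - i) s * riemannZeta (((i : ℂ) + 1) * s)))
      (𝓝[≠] (1 / k)) (𝓝 (k * q * (leadingPoleCoeff k q * Z j (1 / k)))) := by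
  rcases q with _ | q
  · simp
  have hpole : k - 1 ∈ Ico j (k * (q + 1) + j) := mem_Ico.2 ⟨by omega, by rw [Nat.mul_succ]; omega⟩
  have hterm : ∀ i ∈ Ico j (k * (q + 1) + j), Tendsto (fun s : ℂ => ((k : ℂ) * s - 1) ^ (q + 1) *
      ((-1 : ℂ) ^ i * Z (k * (q + 1) + j - 1 - i) s * riemannZeta (((i : ℂ) + 1) * s)))
      (𝓝[≠] (1 / k))
      (𝓝 (if i = k - 1 then (-1 : ℂ) ^ (k - 1) * (leadingPoleCoeff k q * Z j (1 / k)) else 0)) := by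
    intro i hi
    obtain ⟨hji, him⟩ := mem_Ico.1 hi
    split_ifs with hik
    · subst hik
      rw [show k * (q + 1) + j - 1 - (k - 1) = k * q + j by rw [Nat.mul_succ]; omega]
      exact tendsto_pow_succ_mul_zeta_term_pole (ih q j hj (by rw [Nat.mul_succ]; omega)) hk (by omega)
    · set n := k * (q + 1) + j - 1 - i
      have hn : n < k * (q + 1) := by omega
      have hdiv : n / k < q + 1 := (Nat.div_lt_iff_lt_mul (by omega)).2 (by linarith)
      have h := ih (n / k) (n % k) (Nat.mod_lt n (by omega)) (by rw [Nat.div_add_mod]; omega)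
      rw [Nat.div_add_mod] at h
      exact tendsto_pow_mul_zeta_term_of_lt h hk hdiv (by omega)
  convert tendsto_finsetSum _ hterm using 2
  rw [sum_ite_eq', if_pos hpole, ← mul_assoc ((-1 : ℂ) ^ (k - 1)),
    neg_one_pow_mul_leadingPoleCoeff hk q]
  ring

theorem tendsto_pow_mul_Z (hk : k ≠ 0) (q j : ℕ) (hj : j < k) :
    Tendsto (fun s : ℂ => ((k : ℂ) * s - 1) ^ q * Z (k * q + j) s) (𝓝[≠] (1 / k))
      (𝓝 (leadingPoleCoeff k q * Z j (1 / k))) := by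
  induction hm : k * q + j using Nat.strong_induction_on generalizing q j with
  | _ m ih =>
  subst hm
  rcases Nat.eq_zero_or_pos (k * q + j) with hm0 | hm0
  · obtain ⟨rfl, rfl⟩ : q = 0 ∧ j = 0 := by simp_all
    simp [Z, leadingPoleCoeff]
  replace ih := fun q' j' hj' hlt => ih _ hlt q' j' hj' rfl
  have hhead : ∀ i ∈ range j, Tendsto (fun s : ℂ => ((k : ℂ) * s - 1) ^ q *
      ((-1 : ℂ) ^ i * Z (k * q + j - 1 - i) s * riemannZeta (((i : ℂ) + 1) * s))) (𝓝[≠] (1 / k))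
      (𝓝 ((-1 : ℂ) ^ i * (leadingPoleCoeff k q * Z (j - 1 - i) (1 / k)) *
        riemannZeta (((i : ℂ) + 1) * (1 / k)))) := by
    intro i hi
    have hij := mem_range.1 hi
    rw [show k * q + j - 1 - i = k * q + (j - 1 - i) by omega]
    exact tendsto_pow_mul_zeta_term (ih q _ (by omega) (by omega)) (by omega)
  have hm : ((k * q + j : ℕ) : ℂ) ≠ 0 := Nat.cast_ne_zero.2 hm0.ne'
  have hZj : ∑ i ∈ range j, (-1 : ℂ) ^ i * (leadingPoleCoeff k q * Z (j - 1 - i) (1 / k)) *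
      riemannZeta (((i : ℂ) + 1) * (1 / k)) = leadingPoleCoeff k q * (j * Z j (1 / k)) := by
    rw [natCast_mul_Z, mul_sum]
    exact sum_congr rfl fun i _ => by ring
  convert ((tendsto_finsetSum _ hhead).add (tendsto_pow_mul_Z_tail_sum hk hj q ih)).const_mul
    ((k * q + j : ℕ) : ℂ)⁻¹ using 1
  · funext s
    rw [sum_range_add_sum_Ico _ (by omega), ← mul_sum, ← natCast_mul_Z]
    field_simp
  · rw [hZj]
    congr 1
    push_cast at hm ⊢
    field_simp
    ring

end

theorem multiple_zeta_leading_coeff_kr_add_l_general (k r l : ℕ) (hk : 2 ≤ k)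
    (hlk : l ≤ k - 1) :
    Tendsto (fun s : ℂ => ((k : ℂ) * s - 1) ^ r * Z (k * r + l) s)
      (𝓝[≠] (1 / (k : ℂ)))
      (𝓝 ((-1 : ℂ) ^ ((k - 1) * r) / ((k : ℂ) ^ r * (Nat.factorial r : ℂ)) * Z l (1 / (k : ℂ)))) :=
  tendsto_pow_mul_Z (by omega) r l (by omega)

theorem multiple_zeta_leading_coeff_kr_add_l (k r l : ℕ) (hk : 2 ≤ k) (hr : 1 ≤ r)
    (hl1 : 1 ≤ l) (hlk : l ≤ k - 1) :
    Tendsto (fun s : ℂ => ((k : ℂ) * s - 1) ^ r * Z (k * r + l) s)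
      (𝓝[≠] (1 / (k : ℂ)))
      (𝓝 ((-1 : ℂ) ^ ((k - 1) * r) / ((k : ℂ) ^ r * (Nat.factorial r : ℂ)) * Z l (1 / (k : ℂ)))) :=
  multiple_zeta_leading_coeff_kr_add_l_general k r l hk hlk
end
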